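/- If |ψ⟩ and |φ⟩ are n-qubit stabilizer states drawn independently and uniformly at random, then the expected value of |⟨ψ|φ⟩| tends to 0 as n → ∞. -/

import Mathlib

open scoped BigOperators

noncomputable section

/-- The state space of `n` qubits, as complex functions on bitstrings. -/
abbrev QState (n : ℕ) : Type := (Fin n → ZMod 2) → ℂ

/-- Hermitian inner product `⟨ψ|φ⟩` (conjugate-linear in the first argument). -/
def qInner {n : ℕ} (ψ φ : QState n) : ℂ := ∑ b, (starRingEnd ℂ) (ψ b) * φ b

/-- The Pauli operator `i^k · X(x) Z(z)` on `n` qubits. -/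
def pauliFun (n : ℕ) (k : ZMod 4) (x z : Fin n → ZMod 2) : QState n → QState n :=
  fun ψ b => Complex.I ^ k.val * (-1 : ℂ) ^ (∑ i, (z i * (b i + x i)).val) * ψ (b + x)

/-- The `n`-qubit Pauli group, as a set of operators. -/
def PauliGroup (n : ℕ) : Set (QState n → QState n) :=
  {U | ∃ k x z, U = pauliFun n k x z}

/-- The stabilizer group of a state: Pauli operators fixing it. -/
def stabGroup (n : ℕ) (ψ : QState n) : Set (QState n → QState n) :=
  {U | U ∈ PauliGroup n ∧ U ψ = ψ}

/-- An `n`-qubit stabilizer state: a unit vector with `2^n` stabilizers. -/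
def IsStabilizerState (n : ℕ) (ψ : QState n) : Prop :=
  qInner ψ ψ = 1 ∧ (stabGroup n ψ).ncard = 2 ^ n

/-- Two states are parallel (equal up to a global phase/scalar). -/
def Parallel {n : ℕ} (ψ φ : QState n) : Prop := ∃ c : ℂ, φ = c • ψ

/-!
The set of stabilizer states is invariant under the Pauli operators `X(a)` and `Z(a)`, so for a
system `T` of representatives the frame operator `∑_{φ ∈ T} |φ⟩⟨φ|` commutes with them: conjugation
by `Z(a)` kills its off-diagonal entries and conjugation by `X(a)` makes its diagonal constant.
Hence it equals `(#T / 2^n) · 1`, i.e. `∑_{φ ∈ T} |⟨ψ|φ⟩|² = #T / 2^n` for every unit vector `ψ`,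
and Cauchy–Schwarz bounds the average of `|⟨ψ|φ⟩|` over `T × T` by `2^{-n/2}`.
-/

open ComplexConjugate

variable {n : ℕ}

lemma neg_one_pow_val_add {R : Type*} [Ring R] (a b : ZMod 2) :
    (-1 : R) ^ (a + b).val = (-1) ^ a.val * (-1) ^ b.val := by
  rw [ZMod.val_add, ← neg_one_pow_eq_pow_mod_two, pow_add]

lemma zmod_two_add_eq_one_of_ne {a b : ZMod 2} (h : a ≠ b) : a + b = 1 := by
  revert a b; decide

lemma bitstring_add_self (w : Fin n → ZMod 2) : w + w = 0 :=
  funext fun i => CharTwo.add_self_eq_zero (w i)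

def dotSign (z w : Fin n → ZMod 2) : ℂ := (-1) ^ ∑ i, (z i * w i).val

lemma dotSign_eq_prod (z w : Fin n → ZMod 2) :
    dotSign z w = ∏ i, (-1 : ℂ) ^ (z i * w i).val :=
  (Finset.prod_pow_eq_pow_sum _ _ _).symm

lemma dotSign_add_right (z w w' : Fin n → ZMod 2) :
    dotSign z (w + w') = dotSign z w * dotSign z w' := by
  simp only [dotSign_eq_prod, Pi.add_apply, mul_add, neg_one_pow_val_add,
    Finset.prod_mul_distrib]

lemma dotSign_mul_self (z w : Fin n → ZMod 2) : dotSign z w * dotSign z w = 1 := by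
  rw [dotSign, ← pow_add, ← two_mul, pow_mul, neg_one_sq, one_pow]

lemma conj_dotSign (z w : Fin n → ZMod 2) : conj (dotSign z w) = dotSign z w := by
  simp [dotSign]

lemma dotSign_single (i : Fin n) (w : Fin n → ZMod 2) :
    dotSign (Pi.single i 1) w = (-1) ^ (w i).val := by
  rw [dotSign, Finset.sum_eq_single i (fun j _ hj => by simp [Pi.single_eq_of_ne hj])
    (by simp), Pi.single_eq_same, one_mul]

lemma pauliFun_apply (k : ZMod 4) (x z : Fin n → ZMod 2) (ψ : QState n) (b : Fin n → ZMod 2) :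
    pauliFun n k x z ψ b = Complex.I ^ k.val * dotSign z (b + x) * ψ (b + x) :=
  rfl

lemma pauliFun_smul (k : ZMod 4) (x z : Fin n → ZMod 2) (c : ℂ) (ψ : QState n) :
    pauliFun n k x z (c • ψ) = c • pauliFun n k x z ψ := by
  funext b
  simp only [pauliFun_apply, Pi.smul_apply, smul_eq_mul]
  ring

lemma qInner_pauliFun (k : ZMod 4) (x z : Fin n → ZMod 2) (ψ φ : QState n) :
    qInner (pauliFun n k x z ψ) (pauliFun n k x z φ) = qInner ψ φ := by
  have hphase : conj (Complex.I ^ k.val) * Complex.I ^ k.val = 1 := by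
    rw [Complex.conj_mul', norm_pow, Complex.norm_I, one_pow, Complex.ofReal_one, one_pow]
  refine Fintype.sum_equiv (Equiv.addRight x) _ _ fun b => ?_
  simp only [Equiv.coe_addRight, pauliFun_apply, map_mul, conj_dotSign]
  linear_combination (conj (ψ (b + x)) * φ (b + x) * dotSign z (b + x) * dotSign z (b + x)) *
    hphase + conj (ψ (b + x)) * φ (b + x) * dotSign_mul_self z (b + x)

def pauliX (n : ℕ) (a : Fin n → ZMod 2) : QState n → QState n := pauliFun n 0 a 0

def pauliZ (n : ℕ) (a : Fin n → ZMod 2) : QState n → QState n := pauliFun n 0 0 a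

lemma pauliX_apply (a : Fin n → ZMod 2) (ψ : QState n) (b : Fin n → ZMod 2) :
    pauliX n a ψ b = ψ (b + a) := by
  simp [pauliX, pauliFun]

lemma pauliZ_apply (a : Fin n → ZMod 2) (ψ : QState n) (b : Fin n → ZMod 2) :
    pauliZ n a ψ b = dotSign a b * ψ b := by
  simp [pauliZ, pauliFun, dotSign]

lemma pauliX_mem (a : Fin n → ZMod 2) : pauliX n a ∈ PauliGroup n := ⟨0, a, 0, rfl⟩

lemma pauliZ_mem (a : Fin n → ZMod 2) : pauliZ n a ∈ PauliGroup n := ⟨0, 0, a, rfl⟩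

lemma pauliX_involutive (a : Fin n → ZMod 2) : Function.Involutive (pauliX n a) := fun ψ => by
  funext b
  rw [pauliX_apply, pauliX_apply, add_assoc, bitstring_add_self, add_zero]

lemma pauliZ_involutive (a : Fin n → ZMod 2) : Function.Involutive (pauliZ n a) := fun ψ => by
  funext b
  rw [pauliZ_apply, pauliZ_apply, ← mul_assoc, dotSign_mul_self, one_mul]

lemma pauliX_comp_pauliFun_comp_pauliX (a : Fin n → ZMod 2) (k : ZMod 4) (x z : Fin n → ZMod 2) :
    pauliX n a ∘ pauliFun n k x z ∘ pauliX n a = fun ψ => dotSign z a • pauliFun n k x z ψ := by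
  funext ψ b
  simp only [Function.comp_apply, pauliX_apply, pauliFun_apply, Pi.smul_apply, smul_eq_mul]
  have hb : b + a + x + a = b + x := by
    rw [show b + a + x + a = b + x + (a + a) by abel, bitstring_add_self, add_zero]
  rw [hb, show b + a + x = b + x + a by abel, dotSign_add_right]
  ring

lemma pauliZ_comp_pauliFun_comp_pauliZ (a : Fin n → ZMod 2) (k : ZMod 4) (x z : Fin n → ZMod 2) :
    pauliZ n a ∘ pauliFun n k x z ∘ pauliZ n a = fun ψ => dotSign a x • pauliFun n k x z ψ := by
  funext ψ b
  simp only [Function.comp_apply, pauliZ_apply, pauliFun_apply, Pi.smul_apply, smul_eq_mul]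
  have hsign : dotSign a b * dotSign a (b + x) = dotSign a x := by
    rw [← dotSign_add_right, ← add_assoc, bitstring_add_self, zero_add]
  linear_combination (Complex.I ^ k.val * dotSign z (b + x) * ψ (b + x)) * hsign

lemma dotSign_smul_pauliFun_mem (w w' : Fin n → ZMod 2) (k : ZMod 4) (x z : Fin n → ZMod 2) :
    (fun ψ => dotSign w w' • pauliFun n k x z ψ) ∈ PauliGroup n := by
  set m := ∑ i, (w i * w' i).val
  -- `(-1)^m = i^(2m)` is absorbed into the phase `k`
  refine ⟨k + 2 * m, x, z, funext fun ψ => funext fun b => ?_⟩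
  have hphase : Complex.I ^ (k + 2 * m : ZMod 4).val = (-1) ^ m * Complex.I ^ k.val := by
    have hmod : ∀ j : ℕ, Complex.I ^ (j % 4) = Complex.I ^ j := fun j => by
      conv_rhs => rw [← Nat.mod_add_div j 4, pow_add, pow_mul, Complex.I_pow_four, one_pow,
        mul_one]
    rw [show (k + 2 * m : ZMod 4) = ((k.val + 2 * m : ℕ) : ZMod 4) by simp, ZMod.val_natCast,
      hmod, pow_add, pow_mul, Complex.I_sq, mul_comm]
  simp only [Pi.smul_apply, smul_eq_mul, pauliFun_apply, hphase, dotSign]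
  ring

lemma IsStabilizerState.map_of_involutive {U : QState n → QState n} (hU : U ∈ PauliGroup n)
    (hinv : Function.Involutive U) (hconj : ∀ P ∈ PauliGroup n, U ∘ P ∘ U ∈ PauliGroup n)
    {φ : QState n} (hφ : IsStabilizerState n φ) : IsStabilizerState n (U φ) := by
  have hconjU : Function.Involutive fun P : QState n → QState n => U ∘ P ∘ U := fun P => by
    funext ψ
    simp only [Function.comp_apply, hinv _]
  have hstab : stabGroup n (U φ) = (fun P => U ∘ P ∘ U) '' stabGroup n φ := by
    rw [hconjU.image_eq_preimage_symm]
    ext Q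
    simp only [stabGroup, Set.mem_preimage, Set.mem_ofPred_eq, Function.comp_apply, hinv.eq_iff]
    refine and_congr_left fun _ => ⟨hconj Q, fun h => ?_⟩
    simpa only [hconjU Q] using hconj _ h
  obtain ⟨k, x, z, rfl⟩ := hU
  refine ⟨by rw [qInner_pauliFun]; exact hφ.1, ?_⟩
  rw [hstab, Set.ncard_image_of_injective _ hconjU.injective]
  exact hφ.2

lemma IsStabilizerState.pauliX {φ : QState n} (hφ : IsStabilizerState n φ)
    (a : Fin n → ZMod 2) : IsStabilizerState n (pauliX n a φ) := by
  refine hφ.map_of_involutive (pauliX_mem a) (pauliX_involutive a) ?_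
  rintro _ ⟨k, x, z, rfl⟩
  rw [pauliX_comp_pauliFun_comp_pauliX]
  exact dotSign_smul_pauliFun_mem ..

lemma IsStabilizerState.pauliZ {φ : QState n} (hφ : IsStabilizerState n φ)
    (a : Fin n → ZMod 2) : IsStabilizerState n (pauliZ n a φ) := by
  refine hφ.map_of_involutive (pauliZ_mem a) (pauliZ_involutive a) ?_
  rintro _ ⟨k, x, z, rfl⟩
  rw [pauliZ_comp_pauliFun_comp_pauliZ]
  exact dotSign_smul_pauliFun_mem ..

structure StabilizerTransversal (n : ℕ) (T : Finset (QState n)) : Prop where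
  isStabilizerState : ∀ ψ ∈ T, IsStabilizerState n ψ
  exists_parallel : ∀ φ, IsStabilizerState n φ → ∃ ψ ∈ T, Parallel ψ φ
  eq_of_parallel : ∀ ψ ∈ T, ∀ φ ∈ T, Parallel ψ φ → ψ = φ

def PhaseInvariant (F : QState n → ℂ) : Prop :=
  ∀ (c : ℂ) (φ : QState n), ‖c‖ = 1 → F (c • φ) = F φ

lemma qInner_smul_smul (c : ℂ) (ψ : QState n) :
    qInner (c • ψ) (c • ψ) = ‖c‖ ^ 2 * qInner ψ ψ := by
  rw [qInner, qInner, Finset.mul_sum, ← Complex.conj_mul']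
  refine Finset.sum_congr rfl fun b _ => ?_
  simp only [Pi.smul_apply, smul_eq_mul, map_mul]
  ring

lemma norm_eq_one_of_qInner_smul {c : ℂ} {ψ : QState n} (hψ : qInner ψ ψ = 1)
    (h : qInner (c • ψ) (c • ψ) = 1) : ‖c‖ = 1 := by
  rw [qInner_smul_smul, hψ, mul_one] at h
  exact (pow_eq_one_iff_of_nonneg (norm_nonneg c) two_ne_zero).mp (by exact_mod_cast h)

lemma phaseInvariant_mul_conj (b b' : Fin n → ZMod 2) :
    PhaseInvariant fun φ : QState n => φ b * conj (φ b') := fun c φ hc => by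
  have hunit : conj c * c = 1 := by rw [Complex.conj_mul', hc]; simp
  simp only [Pi.smul_apply, smul_eq_mul, map_mul]
  linear_combination φ b * conj (φ b') * hunit

namespace StabilizerTransversal

variable {T : Finset (QState n)} (hT : StabilizerTransversal n T)
include hT

lemma exists_smul_eq {φ : QState n} (hφ : IsStabilizerState n φ) :
    ∃ ψ ∈ T, ∃ c : ℂ, ‖c‖ = 1 ∧ φ = c • ψ := by
  obtain ⟨ψ, hψT, c, rfl⟩ := hT.exists_parallel φ hφ
  exact ⟨ψ, hψT, c, norm_eq_one_of_qInner_smul (hT.isStabilizerState ψ hψT).1 hφ.1, rfl⟩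

theorem sum_comp_eq {U : QState n → QState n}
    (hU : ∀ φ, IsStabilizerState n φ → IsStabilizerState n (U φ))
    (hinv : Function.Involutive U) (hsmul : ∀ (c : ℂ) ψ, U (c • ψ) = c • U ψ)
    {F : QState n → ℂ} (hF : PhaseInvariant F) :
    ∑ φ ∈ T, F (U φ) = ∑ φ ∈ T, F φ := by
  choose! σ hσT c hc hUσ using fun φ (hφ : φ ∈ T) =>
    hT.exists_smul_eq (hU φ (hT.isStabilizerState φ hφ))
  -- the representative `σ φ` of the ray of `U φ` is an involution of `T`, as `U` is one
  have hσσ : ∀ φ ∈ T, σ (σ φ) = φ := fun φ hφ => by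
    refine hT.eq_of_parallel _ (hσT _ (hσT φ hφ)) φ hφ ⟨c φ * c (σ φ), ?_⟩
    rw [mul_smul, ← hUσ (σ φ) (hσT φ hφ), ← hsmul, ← hUσ φ hφ, hinv φ]
  refine Finset.sum_nbij' σ σ hσT hσT hσσ hσσ fun φ hφ => ?_
  rw [hUσ φ hφ, hF _ _ (hc φ hφ)]

theorem sum_mul_conj_of_ne {b b' : Fin n → ZMod 2} (h : b ≠ b') :
    ∑ φ ∈ T, φ b * conj (φ b') = 0 := by
  obtain ⟨i, hi⟩ := Function.ne_iff.mp h
  have hflip : ∀ φ : QState n, pauliZ n (Pi.single i 1) φ b *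
      conj (pauliZ n (Pi.single i 1) φ b') = -(φ b * conj (φ b')) := fun φ => by
    have hsign : dotSign (Pi.single i 1) b * dotSign (Pi.single i 1) b' = -1 := by
      rw [← dotSign_add_right, dotSign_single, Pi.add_apply, zmod_two_add_eq_one_of_ne hi,
        ZMod.val_one, pow_one]
    simp only [pauliZ_apply, map_mul, conj_dotSign]
    linear_combination φ b * conj (φ b') * hsign
  have hinv := hT.sum_comp_eq (fun φ hφ => hφ.pauliZ (Pi.single i 1)) (pauliZ_involutive _)
    (pauliFun_smul 0 0 _) (phaseInvariant_mul_conj b b')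
  simp only [hflip, Finset.sum_neg_distrib] at hinv
  linear_combination -hinv / 2

theorem sum_mul_conj_self_eq (b b' : Fin n → ZMod 2) :
    ∑ φ ∈ T, φ b * conj (φ b) = ∑ φ ∈ T, φ b' * conj (φ b') := by
  have hinv := hT.sum_comp_eq (fun φ hφ => hφ.pauliX (b + b')) (pauliX_involutive _)
    (pauliFun_smul 0 _ 0) (phaseInvariant_mul_conj b b)
  simp only [pauliX_apply, ← add_assoc, bitstring_add_self, zero_add] at hinv
  exact hinv.symm

theorem sum_mul_conj (b b' : Fin n → ZMod 2) :
    ∑ φ ∈ T, φ b * conj (φ b') = if b = b' then (T.card : ℂ) / 2 ^ n else 0 := by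
  split_ifs with h
  · subst h
    have htrace : ∑ b' : Fin n → ZMod 2, ∑ φ ∈ T, φ b' * conj (φ b') = T.card := by
      rw [Finset.sum_comm, Finset.card_eq_sum_ones, Nat.cast_sum]
      refine Finset.sum_congr rfl fun φ hφ => ?_
      rw [Nat.cast_one, ← (hT.isStabilizerState φ hφ).1, qInner]
      exact Finset.sum_congr rfl fun _ _ => mul_comm _ _
    simp only [hT.sum_mul_conj_self_eq _ b, Finset.sum_const, Finset.card_univ,
      Fintype.card_fun, Fintype.card_fin, ZMod.card, nsmul_eq_mul, Nat.cast_pow, Nat.cast_ofNat] at htrace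
    rw [← htrace]
    field_simp
  · exact hT.sum_mul_conj_of_ne h

theorem sum_norm_qInner_sq {ψ : QState n} (hψ : qInner ψ ψ = 1) :
    ∑ φ ∈ T, ‖qInner ψ φ‖ ^ 2 = T.card / 2 ^ n := by
  have hexpand : ∀ φ : QState n, (‖qInner ψ φ‖ : ℂ) ^ 2 =
      ∑ b, ∑ b', conj (ψ b) * ψ b' * (φ b * conj (φ b')) := fun φ => by
    rw [← Complex.mul_conj', qInner, map_sum, Finset.sum_mul_sum]
    refine Finset.sum_congr rfl fun b _ => Finset.sum_congr rfl fun b' _ => ?_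
    rw [map_mul, Complex.conj_conj]
    ring
  apply Complex.ofReal_injective
  push_cast
  calc ∑ φ ∈ T, (‖qInner ψ φ‖ : ℂ) ^ 2
      = ∑ b, ∑ b', conj (ψ b) * ψ b' * ∑ φ ∈ T, φ b * conj (φ b') := by
        simp only [hexpand, Finset.mul_sum]
        rw [Finset.sum_comm]
        exact Finset.sum_congr rfl fun b _ => Finset.sum_comm
    _ = ∑ b, conj (ψ b) * ψ b * ((T.card : ℂ) / 2 ^ n) := by
        simp only [hT.sum_mul_conj, mul_ite, mul_zero, Finset.sum_ite_eq, Finset.mem_univ,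
          if_true]
    _ = (T.card : ℂ) / 2 ^ n := by rw [← Finset.sum_mul, ← qInner, hψ, one_mul]

theorem sum_norm_qInner_le {ψ : QState n} (hψ : qInner ψ ψ = 1) :
    ∑ φ ∈ T, ‖qInner ψ φ‖ ≤ T.card * √(2⁻¹) ^ n := by
  have hCS := sq_sum_le_card_mul_sum_sq (s := T) (f := fun φ => ‖qInner ψ φ‖)
  rw [hT.sum_norm_qInner_sq hψ] at hCS
  refine le_of_pow_le_pow_left₀ two_ne_zero (by positivity) (hCS.trans_eq ?_)
  rw [mul_pow, ← pow_mul, mul_comm n, pow_mul, Real.sq_sqrt (by norm_num), inv_pow]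
  ring

theorem average_norm_qInner_le :
    (∑ ψ ∈ T, ∑ φ ∈ T, ‖qInner ψ φ‖) / (T.card : ℝ) ^ 2 ≤ √(2⁻¹) ^ n := by
  refine div_le_of_le_mul₀ (by positivity) (by positivity) ?_
  calc ∑ ψ ∈ T, ∑ φ ∈ T, ‖qInner ψ φ‖
      ≤ ∑ ψ ∈ T, (T.card : ℝ) * √(2⁻¹) ^ n :=
        Finset.sum_le_sum fun ψ hψ => hT.sum_norm_qInner_le (hT.isStabilizerState ψ hψ).1
    _ = √(2⁻¹) ^ n * (T.card : ℝ) ^ 2 := by rw [Finset.sum_const, nsmul_eq_mul]; ring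

end StabilizerTransversal

/-- For `ψ, φ` drawn independently and uniformly from the `n`-qubit stabilizer
states (represented by any system `T n` of representatives, one per global
phase class), the expected value of `|⟨ψ|φ⟩|` tends to `0` as `n → ∞`. -/
theorem expected_inner_tendsto_zero (T : ∀ n : ℕ, Finset (QState n))
    (hstab : ∀ n, ∀ ψ ∈ T n, IsStabilizerState n ψ)
    (hrep : ∀ n, ∀ φ : QState n, IsStabilizerState n φ → ∃ ψ ∈ T n, Parallel ψ φ)
    (huniq : ∀ n, ∀ ψ ∈ T n, ∀ φ ∈ T n, Parallel ψ φ → ψ = φ) :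
    Filter.Tendsto
      (fun n : ℕ =>
        (∑ ψ ∈ T n, ∑ φ ∈ T n, ‖qInner ψ φ‖) / ((T n).card : ℝ) ^ 2)
      Filter.atTop (nhds 0) := by
  have hT : ∀ n, StabilizerTransversal n (T n) := fun n => ⟨hstab n, hrep n, huniq n⟩
  have hratio : √(2⁻¹ : ℝ) < 1 := by rw [Real.sqrt_lt' one_pos]; norm_num
  exact squeeze_zero (fun n => by positivity) (fun n => (hT n).average_norm_qInner_le)
    (tendsto_pow_atTop_nhds_zero_of_lt_one (Real.sqrt_nonneg _) hratio)
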